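/- arXiv:0803.2048 — 2 statements merged into one kernel-verified Lean document; each statement's English description precedes it below -/
import Mathlib

section
/- Let g be a finite-dimensional nilpotent Lie algebra over ℂ, C^k g* := Ann(C_k g) ⊆ g* the annihilator filtration of the lower central series, and W^k := span{α ∧ β ∈ Λ²g* : α ∈ C^i g*, β ∈ C^j g*, i + j ≤ k}. Then for α ∈ g*: dα ∈ W^k if and only if α ∈ C^k g*, where d is the Chevalley–Eilenberg differential. -/
/-- The Lie bracket of `g`, bundled as a bilinear map. -/
noncomputable def bracketBilin (g : Type*) [LieRing g] [LieAlgebra ℂ g] :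
    g →ₗ[ℂ] g →ₗ[ℂ] g :=
  LinearMap.mk₂ ℂ (fun x y => ⁅x, y⁆) add_lie smul_lie lie_add lie_smul

/-- The Chevalley–Eilenberg differential `d : g* → Λ²g*`, `(dα)(x,y) = -α⁅x,y⁆`,
with `Λ²g*` realised as bilinear forms on `g`. -/
noncomputable def dCE (g : Type*) [LieRing g] [LieAlgebra ℂ g] (α : Module.Dual ℂ g) :
    g →ₗ[ℂ] g →ₗ[ℂ] ℂ :=
  -((bracketBilin g).compr₂ α)

/-- The wedge `α ∧ β` of two linear functionals, as a bilinear form: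
`(α ∧ β)(u,v) = α(u)β(v) - β(u)α(v)`. -/
noncomputable def wedgeDual (g : Type*) [LieRing g] [LieAlgebra ℂ g]
    (α β : Module.Dual ℂ g) : g →ₗ[ℂ] g →ₗ[ℂ] ℂ :=
  α.smulRight β - β.smulRight α

/-!
The theorem is an instance of a characterisation valid for any skew form `B` on a
finite-dimensional space with a decreasing filtration `F`, `F 0 = ⊤`: `B ∈ W^k` iff
`B (F a) (F b) = 0` whenever `k ≤ a + b + 1`. Necessity is checked on wedges. For sufficiency, a
splitting `V = ⊕ Vₐ` adapted to `F` cuts `B` into blocks `B (Vₐ) (V_b)`; the blocks with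
`a + b + 1 < k` are finite sums of `β ⊗ γ` with `β ∈ Ann F (a+1)`, `γ ∈ Ann F (b+1)`, and
skew-symmetrising turns them into wedges. For `B = dα` and `F` the lower central series the
vanishing condition is equivalent to `α (C_k g) = 0`, since `⁅C_a g, C_b g⁆ ≤ C_{a+b+1} g` and
`C_k g = ⁅g, C_{k-1} g⁆`.
-/

open Finset

section Filtration

variable {K V : Type*} [Field K] [AddCommGroup V] [Module K V]

def tensorFiltration (F : ℕ → Submodule K V) (k : ℕ) : Submodule K (V →ₗ[K] V →ₗ[K] K) :=
  Submodule.span K {W | ∃ i j : ℕ, i + j ≤ k ∧ ∃ β γ : Module.Dual K V,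
    (∀ z ∈ F i, β z = 0) ∧ (∀ z ∈ F j, γ z = 0) ∧ W = β.smulRight γ}

/-- The paper's `W^k` when `F` is the lower central series. -/
def wedgeFiltration (F : ℕ → Submodule K V) (k : ℕ) : Submodule K (V →ₗ[K] V →ₗ[K] K) :=
  Submodule.span K {W | ∃ i j : ℕ, i + j ≤ k ∧ ∃ β γ : Module.Dual K V,
    (∀ z ∈ F i, β z = 0) ∧ (∀ z ∈ F j, γ z = 0) ∧ W = β.smulRight γ - γ.smulRight β}

lemma smulRight_apply_eq_zero_of_filtration {F : ℕ → Submodule K V} (hF : Antitone F)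
    {i j a b k : ℕ} (hij : i + j ≤ k) (hab : k ≤ a + b + 1) {β γ : Module.Dual K V}
    (hβ : ∀ z ∈ F i, β z = 0) (hγ : ∀ z ∈ F j, γ z = 0) {x y : V} (hx : x ∈ F a) (hy : y ∈ F b) :
    β.smulRight γ x y = 0 := by
  rw [LinearMap.smulRight_apply, LinearMap.smul_apply, smul_eq_mul]
  rcases le_or_gt i a with hia | hai
  · rw [hβ x (hF hia hx), zero_mul]
  · rw [hγ y (hF (by omega) hy), mul_zero]

lemma wedgeFiltration_apply_eq_zero {F : ℕ → Submodule K V} (hF : Antitone F) {k a b : ℕ}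
    (hab : k ≤ a + b + 1) {B : V →ₗ[K] V →ₗ[K] K} (hB : B ∈ wedgeFiltration F k)
    {x y : V} (hx : x ∈ F a) (hy : y ∈ F b) : B x y = 0 := by
  induction hB using Submodule.span_induction with
  | mem W hW =>
    obtain ⟨i, j, hij, β, γ, hβ, hγ, rfl⟩ := hW
    rw [LinearMap.sub_apply, LinearMap.sub_apply,
      smulRight_apply_eq_zero_of_filtration hF hij hab hβ hγ hx hy,
      smulRight_apply_eq_zero_of_filtration hF ((add_comm j i).trans_le hij) hab hγ hβ hx hy,
      sub_zero]
  | zero => rfl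
  | add _ _ _ _ h₁ h₂ => simp [h₁, h₂]
  | smul c _ _ h => simp [h]

lemma exists_filtration_splitting {F : ℕ → Submodule K V} (hF : Antitone F) (hF0 : F 0 = ⊤) :
    ∃ p : ℕ → V →ₗ[K] V, (∀ a x, p a x ∈ F a) ∧ (∀ a, ∀ x ∈ F (a + 1), p a x = 0) ∧
      ∀ k x, x - ∑ a ∈ range k, p a x ∈ F k := by
  choose q hq using fun a => (F a).exists_isCompl
  let π a := (F a).projection (q a) (hq a)
  have hπ_mem a x : π a x ∈ F a := Submodule.projection_apply_mem _ x
  have hπ_id a x (hx : x ∈ F a) : π a x = x := Submodule.projection_apply_of_mem_left _ hx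
  refine ⟨fun a => π a - π (a + 1), fun a x => ?_, fun a x hx => ?_, fun k x => ?_⟩
  · exact sub_mem (hπ_mem a x) (hF a.le_succ (hπ_mem (a + 1) x))
  · simp [hπ_id _ _ hx, hπ_id _ _ (hF a.le_succ hx)]
  · have hx : π 0 x = x := hπ_id 0 x (hF0 ▸ Submodule.mem_top)
    simp only [LinearMap.sub_apply, sum_range_sub' (fun a => π a x), hx, sub_sub_cancel]
    exact hπ_mem k x

lemma mem_span_smulRight_of_forall_eq_zero [FiniteDimensional K V] {S T : Submodule K V}
    {B : V →ₗ[K] V →ₗ[K] K} (hS : ∀ x ∈ S, B x = 0) (hT : ∀ x, ∀ y ∈ T, B x y = 0) :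
    B ∈ Submodule.span K {W | ∃ β γ : Module.Dual K V,
      (∀ z ∈ S, β z = 0) ∧ (∀ z ∈ T, γ z = 0) ∧ W = β.smulRight γ} := by
  let B' : V →ₗ[K] T.dualAnnihilator :=
    B.codRestrict _ fun x => (Submodule.mem_dualAnnihilator _).mpr (hT x)
  -- not found by instance search for submodules of `Module.Dual K V`
  have := Module.Free.of_divisionRing K T.dualAnnihilator
  let b := Module.finBasis K T.dualAnnihilator
  have hB : B = ∑ t, ((b.coord t).comp B').smulRight (b t : Module.Dual K V) := by
    refine LinearMap.ext fun x => ?_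
    have h := congr_arg Subtype.val (b.sum_repr (B' x))
    simp only [Submodule.coe_sum, Submodule.coe_smul] at h
    simp only [LinearMap.sum_apply, LinearMap.smulRight_apply, LinearMap.comp_apply,
      Module.Basis.coord_apply]
    exact h.symm
  rw [hB]
  refine Submodule.sum_mem _ fun t _ => Submodule.subset_span ⟨_, _, fun z hz => ?_,
    (Submodule.mem_dualAnnihilator _).mp (b t).2, rfl⟩
  have : B' z = 0 := Subtype.ext (hS z hz)
  simp [this]

lemma mem_tensorFiltration_of_forall_eq_zero [FiniteDimensional K V] {F : ℕ → Submodule K V}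
    (hF : Antitone F) (hF0 : F 0 = ⊤) {k : ℕ} {B : V →ₗ[K] V →ₗ[K] K}
    (hB : ∀ a b, k ≤ a + b + 1 → ∀ x ∈ F a, ∀ y ∈ F b, B x y = 0) :
    B ∈ tensorFiltration F k := by
  obtain ⟨p, hp_mem, hp_ker, hp_sum⟩ := exists_filtration_splitting hF hF0
  have hB_sum : B = ∑ a ∈ range k, ∑ b ∈ range k, B.compl₁₂ (p a) (p b) := by
    ext x y
    have hx : B x y = B (∑ a ∈ range k, p a x) y := by
      rw [← sub_eq_zero, ← LinearMap.sub_apply, ← map_sub]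
      exact hB k 0 (by omega) _ (hp_sum k x) y (hF0 ▸ Submodule.mem_top)
    have hy a : B (p a x) y = B (p a x) (∑ b ∈ range k, p b y) := by
      rw [← sub_eq_zero, ← map_sub]
      exact hB a k (by omega) _ (hp_mem a x) _ (hp_sum k y)
    simp only [hx, map_sum, LinearMap.sum_apply, hy, LinearMap.compl₁₂_apply]
  rw [hB_sum]
  refine Submodule.sum_mem _ fun a _ => Submodule.sum_mem _ fun b _ => ?_
  by_cases hab : k ≤ a + b + 1
  · convert Submodule.zero_mem _
    ext x y
    exact hB a b hab _ (hp_mem a x) _ (hp_mem b y)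
  · refine Submodule.span_mono ?_ (mem_span_smulRight_of_forall_eq_zero
      (S := F (a + 1)) (T := F (b + 1)) (fun x hx => ?_) (fun x y hy => ?_))
    · rintro W ⟨β, γ, hβ, hγ, rfl⟩
      exact ⟨a + 1, b + 1, by omega, β, γ, hβ, hγ, rfl⟩
    · ext y
      simp [hp_ker a x hx]
    · simp [hp_ker b y hy]

lemma sub_flip_mem_wedgeFiltration {F : ℕ → Submodule K V} {k : ℕ} {B : V →ₗ[K] V →ₗ[K] K}
    (hB : B ∈ tensorFiltration F k) : B - B.flip ∈ wedgeFiltration F k := by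
  induction hB using Submodule.span_induction with
  | mem W hW =>
    obtain ⟨i, j, hij, β, γ, hβ, hγ, rfl⟩ := hW
    refine Submodule.subset_span ⟨i, j, hij, β, γ, hβ, hγ, ?_⟩
    ext x y
    simp [mul_comm]
  | zero =>
    convert (wedgeFiltration F k).zero_mem
    ext
    simp
  | add W₁ W₂ _ _ h₁ h₂ =>
    convert add_mem h₁ h₂ using 1
    ext
    simp only [LinearMap.sub_apply, LinearMap.add_apply, LinearMap.flip_apply]
    abel
  | smul c W _ h =>
    convert Submodule.smul_mem _ c h using 1
    ext
    simp only [LinearMap.sub_apply, LinearMap.smul_apply, LinearMap.flip_apply, smul_sub]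

lemma mem_wedgeFiltration_of_flip_eq_neg [NeZero (2 : K)] {F : ℕ → Submodule K V} {k : ℕ}
    {B : V →ₗ[K] V →ₗ[K] K} (h_skew : B.flip = -B) (hB : B ∈ tensorFiltration F k) :
    B ∈ wedgeFiltration F k := by
  have h_half : B = (2⁻¹ : K) • (B - B.flip) := by
    ext x y
    have hxy : B y x = -B x y := by simpa using LinearMap.congr_fun₂ h_skew x y
    simp only [LinearMap.smul_apply, LinearMap.sub_apply, LinearMap.flip_apply, hxy, smul_eq_mul]
    field_simp
    ring
  rw [h_half]
  exact Submodule.smul_mem _ _ (sub_flip_mem_wedgeFiltration hB)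

lemma mem_wedgeFiltration_iff [NeZero (2 : K)] [FiniteDimensional K V] {F : ℕ → Submodule K V}
    (hF : Antitone F) (hF0 : F 0 = ⊤) {k : ℕ} {B : V →ₗ[K] V →ₗ[K] K} (h_skew : B.flip = -B) :
    B ∈ wedgeFiltration F k ↔ ∀ a b, k ≤ a + b + 1 → ∀ x ∈ F a, ∀ y ∈ F b, B x y = 0 :=
  ⟨fun hB _ _ hab _ hx _ hy => wedgeFiltration_apply_eq_zero hF hab hB hx hy,
    fun hB => mem_wedgeFiltration_of_flip_eq_neg h_skew
      (mem_tensorFiltration_of_forall_eq_zero hF hF0 hB)⟩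

end Filtration

section LowerCentralSeries

open LieModule

variable {R L : Type*} [CommRing R] [LieRing L] [LieAlgebra R L]

lemma lie_mem_lowerCentralSeries_succ {M : Type*} [AddCommGroup M] [Module R M]
    [LieRingModule L M] [LieModule R L M] {a : ℕ} (u : L) {m : M}
    (hm : m ∈ lowerCentralSeries R L M a) : ⁅u, m⁆ ∈ lowerCentralSeries R L M (a + 1) := by
  rw [lowerCentralSeries_succ]
  exact LieSubmodule.lie_mem_lie (LieSubmodule.mem_top u) hm

lemma lie_mem_lowerCentralSeries_succ_left {a : ℕ} {x : L}
    (hx : x ∈ lowerCentralSeries R L L a) (u : L) : ⁅x, u⁆ ∈ lowerCentralSeries R L L (a + 1) := by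
  rw [← lie_skew]
  exact neg_mem (lie_mem_lowerCentralSeries_succ u hx)

lemma lie_mem_lowerCentralSeries_add {a b : ℕ} {x y : L} (hx : x ∈ lowerCentralSeries R L L a)
    (hy : y ∈ lowerCentralSeries R L L b) : ⁅x, y⁆ ∈ lowerCentralSeries R L L (a + b + 1) := by
  induction b generalizing a x y with
  | zero => exact lie_mem_lowerCentralSeries_succ_left hx y
  | succ b ih =>
    suffices (lowerCentralSeries R L L (b + 1)).toSubmodule ≤
        (lowerCentralSeries R L L (a + (b + 1) + 1)).toSubmodule.comap (toEnd R L L x) from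
      this hy
    rw [lowerCentralSeries_succ, LieSubmodule.lieIdeal_oper_eq_linear_span', Submodule.span_le]
    rintro _ ⟨u, -, n, hn, rfl⟩
    rw [SetLike.mem_coe, Submodule.mem_comap, toEnd_apply_apply, leibniz_lie]
    refine add_mem ?_ ?_
    · exact (by omega : a + 1 + b + 1 = a + (b + 1) + 1) ▸
        ih (lie_mem_lowerCentralSeries_succ_left hx u) hn
    · exact lie_mem_lowerCentralSeries_succ u (ih hx hn)

end LowerCentralSeries

section ChevalleyEilenberg

open LieModule

variable {g : Type*} [LieRing g] [LieAlgebra ℂ g]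

lemma dCE_apply (α : Module.Dual ℂ g) (x y : g) : dCE g α x y = -α ⁅x, y⁆ := by
  simp [dCE, bracketBilin]

lemma dCE_flip (α : Module.Dual ℂ g) : (dCE g α).flip = -dCE g α := by
  ext x y
  rw [LinearMap.flip_apply, LinearMap.neg_apply, LinearMap.neg_apply, dCE_apply, dCE_apply,
    ← lie_skew, map_neg]

lemma dCE_vanishes_on_lowerCentralSeries_iff {k : ℕ} (hk : 1 ≤ k) (α : Module.Dual ℂ g) :
    (∀ a b, k ≤ a + b + 1 → ∀ x ∈ lowerCentralSeries ℂ g g a,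
      ∀ y ∈ lowerCentralSeries ℂ g g b, dCE g α x y = 0) ↔
      ∀ z ∈ lowerCentralSeries ℂ g g k, α z = 0 := by
  constructor
  · intro h
    obtain ⟨j, rfl⟩ := Nat.exists_eq_add_of_le' hk
    suffices (lowerCentralSeries ℂ g g (j + 1)).toSubmodule ≤ LinearMap.ker α from
      fun z hz => this hz
    rw [lowerCentralSeries_succ, LieSubmodule.lieIdeal_oper_eq_linear_span', Submodule.span_le]
    rintro _ ⟨u, -, n, hn, rfl⟩
    simpa [dCE_apply] using h 0 j (by omega) u (LieSubmodule.mem_top u) n hn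
  · intro hα a b hab x hx y hy
    have hxy := antitone_lowerCentralSeries ℂ g g hab (lie_mem_lowerCentralSeries_add hx hy)
    rw [dCE_apply, hα _ hxy, neg_zero]

end ChevalleyEilenberg

theorem stmt7_general (g : Type*) [LieRing g] [LieAlgebra ℂ g] [FiniteDimensional ℂ g]
    (k : ℕ) (hk : 1 ≤ k) (α : Module.Dual ℂ g) :
    dCE g α ∈ Submodule.span ℂ {W : g →ₗ[ℂ] g →ₗ[ℂ] ℂ |
        ∃ i j : ℕ, i + j ≤ k ∧ ∃ β γ : Module.Dual ℂ g,
          (∀ z ∈ LieModule.lowerCentralSeries ℂ g g i, β z = 0) ∧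
          (∀ z ∈ LieModule.lowerCentralSeries ℂ g g j, γ z = 0) ∧
          W = wedgeDual g β γ} ↔
      ∀ z ∈ LieModule.lowerCentralSeries ℂ g g k, α z = 0 := by
  have hF : Antitone fun i => (LieModule.lowerCentralSeries ℂ g g i).toSubmodule :=
    fun _ _ hij => LieModule.antitone_lowerCentralSeries ℂ g g hij
  have hF0 : (LieModule.lowerCentralSeries ℂ g g 0).toSubmodule = ⊤ := by simp
  exact (mem_wedgeFiltration_iff hF hF0 (dCE_flip α)).trans
    (dCE_vanishes_on_lowerCentralSeries_iff hk α)

/-- For a finite-dimensional nilpotent complex Lie algebra `g`, with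
`C^i g* = Ann(C_i g)` and `W^k` the span of wedges `α ∧ β` with `α ∈ C^i g*`, `β ∈ C^j g*`,
`i + j ≤ k`, one has `dα ∈ W^k ↔ α ∈ C^k g*` (for `k ≥ 1`). -/
theorem stmt7 (g : Type*) [LieRing g] [LieAlgebra ℂ g] [FiniteDimensional ℂ g]
    [LieModule.IsNilpotent g g] (k : ℕ) (hk : 1 ≤ k) (α : Module.Dual ℂ g) :
    dCE g α ∈ Submodule.span ℂ {W : g →ₗ[ℂ] g →ₗ[ℂ] ℂ |
        ∃ i j : ℕ, i + j ≤ k ∧ ∃ β γ : Module.Dual ℂ g,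
          (∀ z ∈ LieModule.lowerCentralSeries ℂ g g i, β z = 0) ∧
          (∀ z ∈ LieModule.lowerCentralSeries ℂ g g j, γ z = 0) ∧
          W = wedgeDual g β γ} ↔
      ∀ z ∈ LieModule.lowerCentralSeries ℂ g g k, α z = 0 :=
  stmt7_general g k hk α
end

section
/- Let g and g' be Lie algebras with g' non-abelian and a a nonzero abelian Lie algebra, and set g = g' ⊕ a (direct sum of Lie algebras). Then g/C₂g ≅ (g'/C₂g') ⊕ a, and this quotient is not isomorphic to a free 2-step nilpotent Lie algebra b_m for any m, because the center of the abelianization quotient contributes generators whose brackets vanish while b_m has the property that the bracket map Λ²(b_m/[b_m,b_m]) → [b_m,b_m] is injective. -/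
/-- The product of two Lie rings, with componentwise bracket. -/
instance prodLieRing (L M : Type*) [LieRing L] [LieRing M] : LieRing (L × M) where
  bracket x y := (⁅x.1, y.1⁆, ⁅x.2, y.2⁆)
  add_lie x y z := by
    show (⁅(x + y).1, z.1⁆, ⁅(x + y).2, z.2⁆)
        = (⁅x.1, z.1⁆, ⁅x.2, z.2⁆) + (⁅y.1, z.1⁆, ⁅y.2, z.2⁆)
    simp [add_lie]
  lie_add x y z := by
    show (⁅x.1, (y + z).1⁆, ⁅x.2, (y + z).2⁆)
        = (⁅x.1, y.1⁆, ⁅x.2, y.2⁆) + (⁅x.1, z.1⁆, ⁅x.2, z.2⁆)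
    simp [lie_add]
  lie_self x := by
    show (⁅x.1, x.1⁆, ⁅x.2, x.2⁆) = 0
    simp
  leibniz_lie x y z := by
    show (⁅x.1, (⁅y.1, z.1⁆, ⁅y.2, z.2⁆).1⁆, ⁅x.2, (⁅y.1, z.1⁆, ⁅y.2, z.2⁆).2⁆)
        = (⁅(⁅x.1, y.1⁆, ⁅x.2, y.2⁆).1, z.1⁆, ⁅(⁅x.1, y.1⁆, ⁅x.2, y.2⁆).2, z.2⁆)
          + (⁅y.1, (⁅x.1, z.1⁆, ⁅x.2, z.2⁆).1⁆, ⁅y.2, (⁅x.1, z.1⁆, ⁅x.2, z.2⁆).2⁆)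
    rw [Prod.mk_add_mk]
    exact Prod.ext (by dsimp; rw [leibniz_lie]) (by dsimp; rw [leibniz_lie])

instance prodLieAlgebra (L M : Type*) [LieRing L] [LieAlgebra ℂ L] [LieRing M]
    [LieAlgebra ℂ M] : LieAlgebra ℂ (L × M) where
  lie_smul c x y := by
    show (⁅x.1, (c • y).1⁆, ⁅x.2, (c • y).2⁆) = c • (⁅x.1, y.1⁆, ⁅x.2, y.2⁆)
    simp [lie_smul]

/-- The wedge of two elements of a module, as an element of the second exterior power. -/
noncomputable def wedge2 {M : Type*} [AddCommGroup M] [Module ℂ M] (x y : M) :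
    ⋀[ℂ]^2 M :=
  ⟨ExteriorAlgebra.ιMulti ℂ 2 ![x, y],
    ExteriorAlgebra.ιMulti_range ℂ 2 (Set.mem_range_self _)⟩

/-- `h` is a free 2-step nilpotent Lie algebra: the map `Λ²(h/[h,h]) → [h,h]` induced by the
Lie bracket is bijective. -/
noncomputable def IsFreeTwoStep (h : Type*) [LieRing h] [LieAlgebra ℂ h] : Prop :=
  ∃ b' : (⋀[ℂ]^2 (h ⧸ LieSubmodule.toSubmodule (LieModule.lowerCentralSeries ℂ h h 1))) →ₗ[ℂ]
      LieSubmodule.toSubmodule (LieModule.lowerCentralSeries ℂ h h 1),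
    (∀ x y : h,
      (b' (wedge2 (Submodule.Quotient.mk x) (Submodule.Quotient.mk y)) : h) = ⁅x, y⁆) ∧
    Function.Bijective b'

/-! The lower central series of `g' × a` is the product of those of the factors, and that of the
abelian factor `a` vanishes from the first step on; this gives the isomorphism.

For non-freeness, write `h` for the quotient, take `x ∉ [g', g']` (possible as `g'` is nilpotent
and nonzero) and `z ≠ 0` in `a`. The images of `(0, z)` and `(x, 0)` in `h` commute, yet they are
linearly independent modulo `[h, h]`, because `[h, h]` pulls back to `[g', g'] × 0`. So the bracket
map `Λ²(h/[h,h]) → [h,h]` kills the nonzero wedge of their classes. -/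

open LieModule

section
variable {R L : Type*} [CommRing R] [LieRing L] [LieAlgebra R L]

theorem LieModule.lowerCentralSeries_eq_bot_of_isTrivial {M : Type*} [AddCommGroup M] [Module R M]
    [LieRingModule L M] [LieModule R L M] [IsTrivial L M] {k : ℕ} (hk : k ≠ 0) :
    lowerCentralSeries R L M k = ⊥ :=
  eq_bot_mono (antitone_lowerCentralSeries R L M (Nat.one_le_iff_ne_zero.mpr hk))
    ((trivial_iff_lower_central_eq_bot R L M).mp inferInstance)

theorem LieAlgebra.exists_notMem_lowerCentralSeries_one [LieAlgebra.IsSolvable L]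
    [Nontrivial L] : ∃ x : L, x ∉ lowerCentralSeries R L L 1 := by
  by_contra! h
  exact (LieAlgebra.derivedSeries_lt_top_of_solvable R L).ne (eq_top_iff.mpr fun x _ => h x)

def LieIdeal.mkQ (I : LieIdeal R L) : L →ₗ⁅R⁆ L ⧸ I where
  toLinearMap := (I : Submodule R L).mkQ
  map_lie' := rfl

@[simp]
theorem LieIdeal.mkQ_apply (I : LieIdeal R L) (x : L) : I.mkQ x = Submodule.Quotient.mk x := rfl

theorem LieIdeal.mkQ_mem_lowerCentralSeries_iff {I : LieIdeal R L} {k : ℕ}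
    (hI : I ≤ lowerCentralSeries R L L k) {x : L} :
    I.mkQ x ∈ lowerCentralSeries R (L ⧸ I) (L ⧸ I) k ↔ x ∈ lowerCentralSeries R L L k := by
  refine ⟨fun hx => ?_, fun hx => LieIdeal.map_lowerCentralSeries_le k (LieIdeal.mem_map hx)⟩
  rw [← LieIdeal.lowerCentralSeries_map_eq k (f := I.mkQ) (Submodule.mkQ_surjective _)] at hx
  obtain ⟨⟨y, hy⟩, hyx⟩ := LieIdeal.mem_map_of_surjective (Submodule.mkQ_surjective _) hx
  have hxy : x - y ∈ I := (Submodule.Quotient.eq _).mp hyx.symm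
  simpa using add_mem (hI hxy) hy

theorem LieHom.nonempty_quotient_equiv_of_surjective {L' : Type*} [LieRing L'] [LieAlgebra R L']
    {f : L →ₗ⁅R⁆ L'} (hf : Function.Surjective f) {I : LieIdeal R L} (hI : f.ker = I) :
    Nonempty ((L ⧸ I) ≃ₗ⁅R⁆ L') := by
  subst hI
  refine ⟨LieEquiv.ofBijective (f.range.incl.comp f.quotKerEquivRange.toLieHom) ⟨?_, ?_⟩⟩
  · exact Subtype.val_injective.comp f.quotKerEquivRange.injective
  · intro y
    obtain ⟨x, rfl⟩ := hf y
    exact ⟨f.ker.mkQ x, rfl⟩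

end

theorem exteriorPower.ιMulti_ne_zero_of_linearIndependent {K E : Type*} [Field K]
    [AddCommGroup E] [Module K E] {n : ℕ} {v : Fin n → E} (hv : LinearIndependent K v) :
    ιMulti K n v ≠ 0 := by
  simpa [ιMulti_family] using
    (ιMulti_family_linearIndependent_field (n := n) hv).ne_zero
      (Set.powersetCard.ofFinEmbEquiv (OrderIso.refl _).toOrderEmbedding)

theorem wedge2_ne_zero {M : Type*} [AddCommGroup M] [Module ℂ M] {x y : M}
    (h : LinearIndependent ℂ ![x, y]) : wedge2 x y ≠ 0 :=
  exteriorPower.ιMulti_ne_zero_of_linearIndependent h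

theorem IsFreeTwoStep.lie_ne_zero {h : Type*} [LieRing h] [LieAlgebra ℂ h] (hh : IsFreeTwoStep h)
    {x y : h} (hxy : LinearIndependent ℂ
      ![(Submodule.Quotient.mk x : h ⧸ LieSubmodule.toSubmodule (lowerCentralSeries ℂ h h 1)),
        Submodule.Quotient.mk y]) :
    ⁅x, y⁆ ≠ 0 := by
  obtain ⟨b', hb', hinj, -⟩ := hh
  intro h0
  refine wedge2_ne_zero hxy (hinj ?_)
  rw [map_zero]
  ext
  rw [hb', h0]
  rfl

section
variable {L M : Type*} [LieRing L] [LieAlgebra ℂ L] [LieRing M] [LieAlgebra ℂ M]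

theorem mem_lowerCentralSeries_prod {k : ℕ} {x : L × M} :
    x ∈ lowerCentralSeries ℂ (L × M) (L × M) k ↔
      x.1 ∈ lowerCentralSeries ℂ L L k ∧ x.2 ∈ lowerCentralSeries ℂ M M k := by
  refine ⟨fun hx => ⟨?_, ?_⟩, fun ⟨h₁, h₂⟩ => ?_⟩
  · exact LieIdeal.map_lowerCentralSeries_le k (LieIdeal.mem_map (f := LieHom.fst ℂ L M) hx)
  · exact LieIdeal.map_lowerCentralSeries_le k (LieIdeal.mem_map (f := LieHom.snd ℂ L M) hx)
  · rw [← Prod.fst_add_snd x]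
    exact add_mem
      (LieIdeal.map_lowerCentralSeries_le k (LieIdeal.mem_map (f := LieHom.inl ℂ L M) h₁))
      (LieIdeal.map_lowerCentralSeries_le k (LieIdeal.mem_map (f := LieHom.inr ℂ L M) h₂))

variable [IsLieAbelian M]

theorem nonempty_prod_quotient_lowerCentralSeries_equiv {k : ℕ} (hk : k ≠ 0) :
    Nonempty (((L × M) ⧸ lowerCentralSeries ℂ (L × M) (L × M) k) ≃ₗ⁅ℂ⁆
      ((L ⧸ lowerCentralSeries ℂ L L k) × M)) := by
  refine LieHom.nonempty_quotient_equiv_of_surjective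
    (f := ((LieIdeal.mkQ (lowerCentralSeries ℂ L L k)).comp (LieHom.fst ℂ L M)).prod
      (LieHom.snd ℂ L M)) ?_ ?_
  · rintro ⟨y, m⟩
    obtain ⟨x, rfl⟩ := Submodule.mkQ_surjective _ y
    exact ⟨(x, m), rfl⟩
  · ext x
    rw [LieHom.mem_ker, mem_lowerCentralSeries_prod,
      lowerCentralSeries_eq_bot_of_isTrivial (L := M) hk]
    simp [Prod.ext_iff]

theorem linearIndependent_mk_inr_inl {N : LieIdeal ℂ (L × M)}
    (hN : N ≤ lowerCentralSeries ℂ (L × M) (L × M) 1) {x : L}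
    (hx : x ∉ lowerCentralSeries ℂ L L 1) {z : M} (hz : z ≠ 0) :
    LinearIndependent ℂ
      ![(Submodule.Quotient.mk (N.mkQ (0, z)) : ((L × M) ⧸ N) ⧸
            LieSubmodule.toSubmodule (lowerCentralSeries ℂ ((L × M) ⧸ N) ((L × M) ⧸ N) 1)),
        Submodule.Quotient.mk (N.mkQ (x, 0))] := by
  rw [LinearIndependent.pair_iff]
  intro s t hst
  have hmem : (t • x, s • z) ∈ lowerCentralSeries ℂ (L × M) (L × M) 1 := by
    rw [← LieIdeal.mkQ_mem_lowerCentralSeries_iff hN, ← LieSubmodule.mem_toSubmodule,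
      ← Submodule.Quotient.mk_eq_zero,
      show ((t • x, s • z) : L × M) = s • (0, z) + t • (x, 0) by simp, map_add, map_smul, map_smul]
    exact hst
  rw [mem_lowerCentralSeries_prod, lowerCentralSeries_eq_bot_of_isTrivial (L := M) one_ne_zero,
    LieSubmodule.mem_bot, smul_eq_zero] at hmem
  obtain ⟨htx, hs⟩ := hmem
  refine ⟨hs.resolve_right hz, ?_⟩
  by_contra ht
  exact hx ((Submodule.smul_mem_iff _ ht).mp htx)

end

theorem stmt11_general (g' a : Type*) [LieRing g'] [LieAlgebra ℂ g'] [LieRing.IsNilpotent g']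
    (hna : ¬IsLieAbelian g')
    [LieRing a] [LieAlgebra ℂ a] [IsLieAbelian a] [Nontrivial a] :
    Nonempty (((g' × a) ⧸ LieModule.lowerCentralSeries ℂ (g' × a) (g' × a) 2) ≃ₗ⁅ℂ⁆
      ((g' ⧸ LieModule.lowerCentralSeries ℂ g' g' 2) × a)) ∧
    ¬ IsFreeTwoStep ((g' × a) ⧸ LieModule.lowerCentralSeries ℂ (g' × a) (g' × a) 2) := by
  refine ⟨nonempty_prod_quotient_lowerCentralSeries_equiv two_ne_zero, fun hfree => ?_⟩
  have : Nontrivial g' := not_subsingleton_iff_nontrivial.mp fun _ =>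
    hna ⟨fun _ _ => Subsingleton.elim _ _⟩
  obtain ⟨x, hx⟩ := LieAlgebra.exists_notMem_lowerCentralSeries_one (R := ℂ) (L := g')
  obtain ⟨z, hz⟩ := exists_ne (0 : a)
  set N := lowerCentralSeries ℂ (g' × a) (g' × a) 2
  have hN : N ≤ lowerCentralSeries ℂ (g' × a) (g' × a) 1 :=
    antitone_lowerCentralSeries ℂ _ _ one_le_two
  have hcomm : ⁅((0, z) : g' × a), ((x, 0) : g' × a)⁆ = 0 := by simp [← Prod.zero_eq_mk]
  refine hfree.lie_ne_zero (linearIndependent_mk_inr_inl hN hx hz) ?_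
  rw [← LieHom.map_lie, hcomm, map_zero]

/-- If `g'` is non-abelian (nilpotent) and `a ≠ 0` is abelian, then for
`g = g' ⊕ a` one has `g/C₂g ≅ (g'/C₂g') ⊕ a`, and this quotient is not a free 2-step
nilpotent Lie algebra. -/
theorem stmt11 (g' a : Type*) [LieRing g'] [LieAlgebra ℂ g'] [LieRing.IsNilpotent g']
    [FiniteDimensional ℂ g'] (hna : ¬IsLieAbelian g')
    [LieRing a] [LieAlgebra ℂ a] [IsLieAbelian a] [Nontrivial a] [FiniteDimensional ℂ a] :
    Nonempty (((g' × a) ⧸ LieModule.lowerCentralSeries ℂ (g' × a) (g' × a) 2) ≃ₗ⁅ℂ⁆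
      ((g' ⧸ LieModule.lowerCentralSeries ℂ g' g' 2) × a)) ∧
    ¬ IsFreeTwoStep ((g' × a) ⧸ LieModule.lowerCentralSeries ℂ (g' × a) (g' × a) 2) :=
  stmt11_general g' a hna
end
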